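/- Assume condition (C). Then for every γ ∈ ℝ the optimal value of the long-run risk-sensitive averaged criterion is independent of the starting point: for all x, x' ∈ E, sup_{π∈Π} J_γ(x,π) = sup_{π∈Π} J_γ(x',π). -/

import Mathlib

open Filter Real

/-- A (history-dependent) policy: at time `n`, the action is a function of `(X_0, …, X_n)`. -/
abbrev Policy (E U : Type*) : Type _ := ∀ n : ℕ, (Fin (n + 1) → E) → U

/-- The stationary Markov policy induced by `u : E → U`. -/
def stationaryPolicy {E U : Type*} (u : E → U) : Policy E U :=
  fun n h => u (h (Fin.last n))

/-- The Markov policy induced by a sequence `u : ℕ → E → U`. -/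
def markovPolicy {E U : Type*} (u : ℕ → E → U) : Policy E U :=
  fun n h => u n (h (Fin.last n))

/-- The action taken at time `i` by policy `pol` along the path `ω = (x_0, …, x_n)`. -/
def act {E U : Type*} (pol : Policy E U) {n : ℕ} (ω : Fin (n + 1) → E) (i : Fin n) : U :=
  pol i.1 (fun j => ω (Fin.castLE (Nat.succ_le_succ i.2.le) j))

/-- Probability of the path `ω = (x_0, …, x_n)` under policy `pol` started at `x`:
`∏_{i=0}^{n-1} P^{a_i}(x_i, x_{i+1})` if `x_0 = x`, and `0` otherwise. -/
def pathProb {E U : Type*} [DecidableEq E] (P : U → E → E → ℝ) (pol : Policy E U)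
    (x : E) (n : ℕ) (ω : Fin (n + 1) → E) : ℝ :=
  (if ω 0 = x then 1 else 0) * ∏ i : Fin n, P (act pol ω i) (ω i.castSucc) (ω i.succ)

/-- Expectation `E_x^pol[f(X_0, …, X_n)]`. -/
noncomputable def expVal {E U : Type*} [Fintype E] [DecidableEq E]
    (P : U → E → E → ℝ) (pol : Policy E U) (x : E) (n : ℕ)
    (f : (Fin (n + 1) → E) → ℝ) : ℝ :=
  ∑ ω : Fin (n + 1) → E, pathProb P pol x n ω * f ω

/-- The (possibly discounted) cumulative reward `Σ_{i=0}^{n-1} d i * c(X_i, a_i)` along `ω`. -/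
def rewSum {E U : Type*} (c : E → U → ℝ) (pol : Policy E U) (d : ℕ → ℝ) (n : ℕ)
    (ω : Fin (n + 1) → E) : ℝ :=
  ∑ i : Fin n, d i.1 * c (ω i.castSucc) (act pol ω i)

/-- Long-run risk-sensitive averaged criterion `J_γ(x, pol)`. -/
noncomputable def Javg {E U : Type*} [Fintype E] [DecidableEq E]
    (P : U → E → E → ℝ) (c : E → U → ℝ) (γ : ℝ) (x : E) (pol : Policy E U) : ℝ :=
  if γ = 0 then
    liminf (fun n : ℕ =>
      (1 / (n : ℝ)) * expVal P pol x n (rewSum c pol (fun _ => 1) n)) atTop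
  else
    liminf (fun n : ℕ =>
      (1 / ((n : ℝ) * γ)) * Real.log (expVal P pol x n
        (fun ω => Real.exp (γ * rewSum c pol (fun _ => 1) n ω)))) atTop

/-- Discounted risk-sensitive criterion `J_γ(x, pol; β)`. -/
noncomputable def Jdisc {E U : Type*} [Fintype E] [DecidableEq E]
    (P : U → E → E → ℝ) (c : E → U → ℝ) (γ : ℝ) (x : E) (pol : Policy E U) (β : ℝ) : ℝ :=
  if γ = 0 then
    limUnder atTop (fun n : ℕ => expVal P pol x n (rewSum c pol (fun i => β ^ i) n))
  else
    (1 / γ) * Real.log (limUnder atTop (fun n : ℕ =>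
      expVal P pol x n (fun ω => Real.exp (γ * rewSum c pol (fun i => β ^ i) n ω))))

/-- Row-stochasticity of the family of transition matrices `(P^a)_{a ∈ U}`. -/
def IsStochastic {E U : Type*} [Fintype E] (P : U → E → E → ℝ) : Prop :=
  (∀ a x y, 0 ≤ P a x y) ∧ ∀ a x, ∑ y, P a x y = 1

/-- Condition (C): strong uniform mixing, `min_{a} min_{x,y} P^a(x,y) > 0`. -/
def CondC {E U : Type*} (P : U → E → E → ℝ) : Prop :=
  ∀ a x y, 0 < P a x y

/-- `w` solves the risk-sensitive discounted Bellman equation for discount `β`. -/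
def IsBellmanSol {E U : Type*} [Fintype E] [Fintype U]
    (P : U → E → E → ℝ) (c : E → U → ℝ) (β : ℝ) (w : E → ℝ → ℝ) : Prop :=
  ∀ x : E, ∀ γ : ℝ, γ ≠ 0 →
    w x γ = ⨆ a : U, (c x a + (1 / γ) * Real.log (∑ y, Real.exp (w y (β * γ)) * P a x y))

/-!
Condition (C) gives `δ > 0` with `δ ≤ P^a(x, y)` for all `a, x, y`; let `|c| ≤ M`.

For `γ ≠ 0`, started at `x'`, the policy that acts as if the chain had started at `x` sees every
path of `pol` from `x` with only its initial state replaced. Path by path, only the first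
transition probability and first reward change, so `E[exp (γ S_n)]` changes by a factor between
`K⁻¹` and `K`, with `K = δ⁻¹ exp (2 |γ| M)`. This is killed by `(1 / (n γ)) log` as `n → ∞`.

For `γ = 0`, the Bellman operator `T h z = max_a (c z a + ∑ y, P^a(z, y) h y)` contracts the
oscillation `max - min` by the Doeblin factor `1 - |E| δ < 1`. Value iteration therefore gives
`h` with `T h - h` constant up to `ε`. By the usual verification argument, every policy from
every state has average reward at most `max (T h - h)`, and the greedy stationary policy for `h`
gets at least `min (T h - h)` from every state.
-/

open Topology

lemma IsStochastic.le_one {E U : Type*} [Fintype E] {P : U → E → E → ℝ}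
    (hP : IsStochastic P) (a : U) (x y : E) : P a x y ≤ 1 :=
  (Finset.single_le_sum (fun z _ => hP.1 a x z) (Finset.mem_univ y)).trans_eq (hP.2 a x)

section PathSpace

variable {E U : Type*}

lemma act_snoc_castSucc (pol : Policy E U) {n : ℕ} (ω : Fin (n + 1) → E) (y : E) (i : Fin n) :
    act pol (Fin.snoc ω y : Fin (n + 2) → E) i.castSucc = act pol ω i := by
  simp only [act, Fin.val_castSucc]
  congr 1
  funext j
  rw [← Fin.snoc_castSucc (α := fun _ => E) (p := ω) (x := y)]
  rfl

lemma act_snoc_last (pol : Policy E U) {n : ℕ} (ω : Fin (n + 1) → E) (y : E) :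
    act pol (Fin.snoc ω y : Fin (n + 2) → E) (Fin.last n) = pol n ω := by
  simp only [act, Fin.val_last]
  congr 1
  funext j
  rw [← Fin.snoc_castSucc (α := fun _ => E) (p := ω) (x := y)]
  rfl

lemma rewSum_snoc (c : E → U → ℝ) (pol : Policy E U) (d : ℕ → ℝ) {n : ℕ}
    (ω : Fin (n + 1) → E) (y : E) :
    rewSum c pol d (n + 1) (Fin.snoc ω y) =
      rewSum c pol d n ω + d n * c (ω (Fin.last n)) (pol n ω) := by
  simp only [rewSum, Fin.sum_univ_castSucc, act_snoc_castSucc, act_snoc_last, Fin.snoc_castSucc,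
    Fin.val_castSucc, Fin.val_last]

lemma abs_rewSum_le {M : ℝ} (hM : ∀ x a, |c x a| ≤ M) (pol : Policy E U) {n : ℕ}
    (ω : Fin (n + 1) → E) : |rewSum c pol (fun _ => 1) n ω| ≤ n * M := by
  refine (Finset.abs_sum_le_sum_abs _ _).trans ?_
  simpa using Finset.sum_le_sum fun (i : Fin n) (_ : i ∈ Finset.univ) =>
    hM (ω i.castSucc) (act pol ω i)

variable [DecidableEq E]

lemma pathProb_snoc (P : U → E → E → ℝ) (pol : Policy E U) (x : E) {n : ℕ}
    (ω : Fin (n + 1) → E) (y : E) :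
    pathProb P pol x (n + 1) (Fin.snoc ω y) =
      pathProb P pol x n ω * P (pol n ω) (ω (Fin.last n)) y := by
  have h0 : (Fin.snoc ω y : Fin (n + 2) → E) 0 = ω 0 :=
    Fin.snoc_castSucc (α := fun _ => E) (i := 0) ..
  simp only [pathProb, h0, Fin.prod_univ_castSucc, act_snoc_castSucc, act_snoc_last,
    Fin.succ_castSucc, Fin.snoc_castSucc, Fin.succ_last, Fin.snoc_last, mul_assoc]

variable [Fintype E]

lemma expVal_zero (P : U → E → E → ℝ) (pol : Policy E U) (x : E)
    (f : (Fin 1 → E) → ℝ) : expVal P pol x 0 f = f (fun _ => x) := by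
  rw [expVal, ← (Equiv.funUnique (Fin 1) E).symm.sum_comp, Finset.sum_eq_single x]
  · simp [pathProb]; rfl
  · intro y _ hy
    simp [pathProb, hy]
  · simp

lemma expVal_succ (P : U → E → E → ℝ) (pol : Policy E U) (x : E) (n : ℕ)
    (f : (Fin (n + 2) → E) → ℝ) :
    expVal P pol x (n + 1) f =
      expVal P pol x n fun ω => ∑ y, P (pol n ω) (ω (Fin.last n)) y * f (Fin.snoc ω y) := by
  rw [expVal, ← (Fin.snocEquiv fun _ => E).sum_comp, Fintype.sum_prod_type, Finset.sum_comm]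
  simp only [expVal, Finset.mul_sum]
  refine Finset.sum_congr rfl fun ω _ => Finset.sum_congr rfl fun y _ => ?_
  simp [Fin.snocEquiv, pathProb_snoc, mul_assoc]

variable {P : U → E → E → ℝ} (pol : Policy E U) (x : E) {n : ℕ}

lemma expVal_add (f g : (Fin (n + 1) → E) → ℝ) :
    expVal P pol x n (fun ω => f ω + g ω) = expVal P pol x n f + expVal P pol x n g := by
  simp only [expVal, mul_add, Finset.sum_add_distrib]

variable {pol x} (hP : IsStochastic P)
include hP

lemma pathProb_nonneg (ω : Fin (n + 1) → E) : 0 ≤ pathProb P pol x n ω :=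
  mul_nonneg (by split_ifs <;> norm_num) (Finset.prod_nonneg fun _ _ => hP.1 _ _ _)

lemma expVal_const (k : ℝ) : expVal P pol x n (fun _ => k) = k := by
  induction n with
  | zero => exact expVal_zero P pol x _
  | succ n ih => simp only [expVal_succ, ← Finset.sum_mul, hP.2, one_mul, ih]

lemma expVal_add_const (f : (Fin (n + 1) → E) → ℝ) (k : ℝ) :
    expVal P pol x n (fun ω => f ω + k) = expVal P pol x n f + k := by
  rw [expVal_add, expVal_const hP]

lemma expVal_mono {f g : (Fin (n + 1) → E) → ℝ} (h : ∀ ω, f ω ≤ g ω) :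
    expVal P pol x n f ≤ expVal P pol x n g :=
  Finset.sum_le_sum fun ω _ => mul_le_mul_of_nonneg_left (h ω) (pathProb_nonneg hP ω)

lemma expVal_le_of_forall_le {f : (Fin (n + 1) → E) → ℝ} {B : ℝ} (h : ∀ ω, f ω ≤ B) :
    expVal P pol x n f ≤ B :=
  (expVal_mono hP h).trans_eq (expVal_const hP B)

lemma le_expVal_of_forall_le {f : (Fin (n + 1) → E) → ℝ} {B : ℝ} (h : ∀ ω, B ≤ f ω) :
    B ≤ expVal P pol x n f :=
  (expVal_const hP B).symm.trans_le (expVal_mono hP h)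

lemma abs_expVal_le {f : (Fin (n + 1) → E) → ℝ} {B : ℝ} (h : ∀ ω, |f ω| ≤ B) :
    |expVal P pol x n f| ≤ B :=
  abs_le.mpr ⟨le_expVal_of_forall_le hP fun ω => (abs_le.mp (h ω)).1,
    expVal_le_of_forall_le hP fun ω => (abs_le.mp (h ω)).2⟩

lemma abs_log_expVal_exp_le {f : (Fin (n + 1) → E) → ℝ} {B : ℝ} (h : ∀ ω, |f ω| ≤ B) :
    |log (expVal P pol x n fun ω => exp (f ω))| ≤ B := by
  have hlo : exp (-B) ≤ expVal P pol x n fun ω => exp (f ω) :=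
    le_expVal_of_forall_le hP fun ω => exp_le_exp.mpr (abs_le.mp (h ω)).1
  have hhi : (expVal P pol x n fun ω => exp (f ω)) ≤ exp B :=
    expVal_le_of_forall_le hP fun ω => exp_le_exp.mpr (abs_le.mp (h ω)).2
  have hpos := (exp_pos _).trans_le hlo
  exact abs_le.mpr ⟨(le_log_iff_exp_le hpos).mpr hlo, (log_le_iff_le_exp hpos).mpr hhi⟩

lemma expVal_exp_pos (f : (Fin (n + 1) → E) → ℝ) :
    0 < expVal P pol x n fun ω => exp (f ω) := by
  obtain ⟨B, hB⟩ := Finite.exists_le fun ω => -f ω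
  exact (exp_pos (-B)).trans_le
    (le_expVal_of_forall_le hP fun ω => exp_le_exp.mpr (by linarith [hB ω]))

end PathSpace

lemma liminf_le_liminf_of_le_add_div {u v : ℕ → ℝ} {C : ℝ}
    (hv : IsBoundedUnder (· ≥ ·) atTop v) (hu : IsBoundedUnder (· ≥ ·) atTop u)
    (hu' : IsBoundedUnder (· ≤ ·) atTop u) (h : ∀ n, 0 < n → v n ≤ u n + C / n) :
    liminf v atTop ≤ liminf u atTop := by
  have hC : Tendsto (fun n : ℕ => C / n) atTop (𝓝 0) := tendsto_const_div_atTop_nhds_zero_nat C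
  calc liminf v atTop ≤ liminf ((fun n : ℕ => C / n) + u) atTop := by
        refine liminf_le_liminf (eventually_atTop.mpr ⟨1, fun n hn => ?_⟩) hv ?_
        · rw [Pi.add_apply, add_comm]; exact h n hn
        · exact (isBoundedUnder_le_add hC.isBoundedUnder_le hu').isCoboundedUnder_ge
    _ ≤ limsup (fun n : ℕ => C / n) atTop + liminf u atTop :=
        liminf_add_le hC.isBoundedUnder_ge hC.isBoundedUnder_le hu hu'.isCoboundedUnder_ge
    _ = liminf u atTop := by rw [hC.limsup_eq, zero_add]

section Criterion

variable {E U : Type*} [Fintype E] [DecidableEq E] {P : U → E → E → ℝ} {c : E → U → ℝ}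

noncomputable def JavgSeq (P : U → E → E → ℝ) (c : E → U → ℝ) (γ : ℝ) (x : E)
    (pol : Policy E U) (n : ℕ) : ℝ :=
  if γ = 0 then (1 / (n : ℝ)) * expVal P pol x n (rewSum c pol (fun _ => 1) n)
  else (1 / ((n : ℝ) * γ)) *
    log (expVal P pol x n fun ω => exp (γ * rewSum c pol (fun _ => 1) n ω))

lemma Javg_eq_liminf (γ : ℝ) (x : E) (pol : Policy E U) :
    Javg P c γ x pol = liminf (JavgSeq P c γ x pol) atTop := by
  unfold Javg JavgSeq
  split_ifs <;> rfl

variable [Nonempty E] [Nonempty U]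

lemma abs_JavgSeq_le (hP : IsStochastic P) {M : ℝ} (hM : ∀ x a, |c x a| ≤ M) (γ : ℝ)
    (x : E) (pol : Policy E U) (n : ℕ) : |JavgSeq P c γ x pol n| ≤ M := by
  have hM0 : 0 ≤ M := (abs_nonneg _).trans (hM (Classical.arbitrary E) (Classical.arbitrary U))
  rcases Nat.eq_zero_or_pos n with rfl | hn
  · simp [JavgSeq, hM0]
  have hn : (0 : ℝ) < n := Nat.cast_pos.mpr hn
  unfold JavgSeq
  split_ifs with hγ
  · rw [one_div_mul_eq_div, abs_div, Nat.abs_cast, div_le_iff₀ hn, mul_comm]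
    exact abs_expVal_le hP fun ω => abs_rewSum_le hM pol ω
  · rw [one_div_mul_eq_div, abs_div, div_le_iff₀ (abs_pos.mpr (mul_ne_zero hn.ne' hγ)),
      abs_mul, Nat.abs_cast]
    refine abs_log_expVal_exp_le hP fun ω => ?_
    rw [abs_mul]
    nlinarith [abs_rewSum_le hM pol ω, abs_nonneg γ]

lemma isBoundedUnder_le_JavgSeq (hP : IsStochastic P) {M : ℝ} (hM : ∀ x a, |c x a| ≤ M)
    (γ : ℝ) (x : E) (pol : Policy E U) :
    IsBoundedUnder (· ≤ ·) atTop (JavgSeq P c γ x pol) :=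
  isBoundedUnder_of ⟨M, fun n => (abs_le.mp (abs_JavgSeq_le hP hM γ x pol n)).2⟩

lemma isBoundedUnder_ge_JavgSeq (hP : IsStochastic P) {M : ℝ} (hM : ∀ x a, |c x a| ≤ M)
    (γ : ℝ) (x : E) (pol : Policy E U) :
    IsBoundedUnder (· ≥ ·) atTop (JavgSeq P c γ x pol) :=
  isBoundedUnder_of ⟨-M, fun n => (abs_le.mp (abs_JavgSeq_le hP hM γ x pol n)).1⟩

lemma bddAbove_range_Javg (hP : IsStochastic P) {M : ℝ} (hM : ∀ x a, |c x a| ≤ M) (γ : ℝ)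
    (x : E) : BddAbove (Set.range fun pol : Policy E U => Javg P c γ x pol) := by
  refine ⟨M, Set.forall_mem_range.mpr fun pol => ?_⟩
  rw [Javg_eq_liminf]
  exact liminf_le_of_frequently_le
    (Frequently.of_forall fun n => (abs_le.mp (abs_JavgSeq_le hP hM γ x pol n)).2)
    (isBoundedUnder_ge_JavgSeq hP hM γ x pol)

end Criterion

lemma mul_exp_le_mul_mul_exp {δ M γ p p' r r' : ℝ} (hδ : 0 < δ) (hp : δ ≤ p)
    (hp' : p' ≤ 1) (hr : |r| ≤ M) (hr' : |r'| ≤ M) :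
    p' * exp (γ * r') ≤ (δ⁻¹ * exp (2 * |γ| * M)) * (p * exp (γ * r)) := by
  have hpp : p' ≤ δ⁻¹ * p := hp'.trans ((le_inv_mul_iff₀ hδ).mpr (by simpa using hp))
  have hrr : exp (γ * r') ≤ exp (2 * |γ| * M) * exp (γ * r) := by
    rw [← exp_add, exp_le_exp]
    have : |γ * (r' - r)| ≤ |γ| * (M + M) := by
      rw [abs_mul]
      exact mul_le_mul_of_nonneg_left ((abs_sub _ _).trans (add_le_add hr' hr)) (abs_nonneg γ)
    linarith [le_abs_self (γ * (r' - r))]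
  calc p' * exp (γ * r') ≤ (δ⁻¹ * p) * (exp (2 * |γ| * M) * exp (γ * r)) :=
        mul_le_mul hpp hrr (exp_pos _).le (by have := hδ.trans_le hp; positivity)
    _ = _ := by ring

lemma prod_mul_exp_le_of_eq_of_ne_zero {E U : Type*} [Fintype E] [Nonempty E] [Nonempty U]
    {P : U → E → E → ℝ} {c : E → U → ℝ} (hP : IsStochastic P) {δ M : ℝ}
    (hδ0 : 0 < δ) (hδ : ∀ a y z, δ ≤ P a y z) (hM : ∀ x a, |c x a| ≤ M) (γ : ℝ)
    {n : ℕ} (a : Fin n → U) {ω ω' : Fin (n + 1) → E} (h : ∀ j, j ≠ 0 → ω' j = ω j) :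
    ∏ i, P (a i) (ω' i.castSucc) (ω' i.succ) * exp (γ * c (ω' i.castSucc) (a i)) ≤
      (δ⁻¹ * exp (2 * |γ| * M)) *
        ∏ i, P (a i) (ω i.castSucc) (ω i.succ) * exp (γ * c (ω i.castSucc) (a i)) := by
  cases n with
  | zero =>
    -- `1 ≤ δ⁻¹ * exp (2 * |γ| * M)`: compare any single step weight with itself
    obtain ⟨a, y⟩ : Nonempty (U × E) := inferInstance
    simp only [Finset.univ_eq_empty, Finset.prod_empty, mul_one]
    exact (le_mul_iff_one_le_left (mul_pos (hδ0.trans_le (hδ a y y)) (exp_pos (γ * c y a)))).mp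
      (mul_exp_le_mul_mul_exp hδ0 (hδ a y y) (hP.le_one a y y) (hM y a) (hM y a))
  | succ m =>
    have hsucc : ∀ i : Fin (m + 1), ω' i.succ = ω i.succ := fun i => h _ (Fin.succ_ne_zero i)
    have htail : ∀ i : Fin m, ω' i.succ.castSucc = ω i.succ.castSucc := fun i =>
      h _ (by simp [Fin.ext_iff])
    rw [Fin.prod_univ_succ, Fin.prod_univ_succ, ← mul_assoc]
    simp only [hsucc, htail, Fin.castSucc_zero]
    exact mul_le_mul_of_nonneg_right
      (mul_exp_le_mul_mul_exp hδ0 (hδ _ _ _) (hP.le_one _ _ _) (hM _ _) (hM _ _))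
      (Finset.prod_nonneg fun i _ => mul_nonneg (hP.1 _ _ _) (exp_pos _).le)

lemma abs_log_sub_log_le {a b K : ℝ} (ha : 0 < a) (hb : 0 < b) (hab : a ≤ K * b)
    (hba : b ≤ K * a) : |log a - log b| ≤ log K := by
  have hK : 0 < K := pos_of_mul_pos_left (ha.trans_le hab) hb.le
  have h1 := log_le_log ha hab
  have h2 := log_le_log hb hba
  rw [log_mul hK.ne' hb.ne'] at h1
  rw [log_mul hK.ne' ha.ne'] at h2
  exact abs_sub_le_iff.mpr ⟨by linarith, by linarith⟩

section StartChange

variable {E U : Type*}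

def asIfStartedAt (x : E) (pol : Policy E U) : Policy E U :=
  fun k h => pol k (Function.update h 0 x)

lemma act_asIfStartedAt_update (pol : Policy E U) {x : E} (x' : E) {n : ℕ}
    {ω : Fin (n + 1) → E} (h0 : ω 0 = x) (i : Fin n) :
    act (asIfStartedAt x pol) (Function.update ω 0 x') i = act pol ω i := by
  simp only [act, asIfStartedAt]
  congr 1
  funext j
  rcases eq_or_ne j 0 with rfl | hj
  · rw [Function.update_self, ← h0]
    rfl
  · have hj' : Fin.castLE (Nat.succ_le_succ i.2.le) j ≠ 0 := by
      rw [Ne, Fin.ext_iff] at hj ⊢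
      exact hj
    rw [Function.update_of_ne hj, Function.update_of_ne hj']

variable [DecidableEq E] {P : U → E → E → ℝ} {c : E → U → ℝ}

lemma pathProb_mul_exp_rewSum (γ : ℝ) (pol : Policy E U) (x : E) {n : ℕ}
    (ω : Fin (n + 1) → E) :
    pathProb P pol x n ω * exp (γ * rewSum c pol (fun _ => 1) n ω) =
      (if ω 0 = x then 1 else 0) *
        ∏ i, P (act pol ω i) (ω i.castSucc) (ω i.succ) *
          exp (γ * c (ω i.castSucc) (act pol ω i)) := by
  rw [pathProb, rewSum, Finset.mul_sum, exp_sum, Finset.prod_mul_distrib, mul_assoc]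
  simp only [one_mul]

def swapStart (x x' : E) {n : ℕ} (ω : Fin (n + 1) → E) : Fin (n + 1) → E :=
  Function.update ω 0 (Equiv.swap x x' (ω 0))

lemma swapStart_involutive (x x' : E) (n : ℕ) :
    Function.Involutive (swapStart x x' (n := n)) := by
  intro ω
  funext j
  rcases eq_or_ne j 0 with rfl | hj
  · simp [swapStart]
  · simp [swapStart, Function.update_of_ne hj]

variable [Fintype E] [Nonempty E] [Nonempty U] (hP : IsStochastic P) {δ M : ℝ} (hδ0 : 0 < δ)
  (hδ : ∀ a y z, δ ≤ P a y z) (hM : ∀ x a, |c x a| ≤ M)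
include hP hδ0 hδ hM

lemma pathProb_mul_exp_swapStart_le (γ : ℝ) (pol : Policy E U) (x x' : E) {n : ℕ}
    (ω : Fin (n + 1) → E) :
    let pol' := asIfStartedAt x pol
    let ω' := swapStart x x' ω
    let K := δ⁻¹ * exp (2 * |γ| * M)
    pathProb P pol' x' n ω' * exp (γ * rewSum c pol' (fun _ => 1) n ω') ≤
        K * (pathProb P pol x n ω * exp (γ * rewSum c pol (fun _ => 1) n ω)) ∧
      pathProb P pol x n ω * exp (γ * rewSum c pol (fun _ => 1) n ω) ≤
        K * (pathProb P pol' x' n ω' * exp (γ * rewSum c pol' (fun _ => 1) n ω')) := by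
  intro pol' ω' K
  simp only [ω', pol', pathProb_mul_exp_rewSum]
  by_cases h0 : ω 0 = x
  · have hω' : swapStart x x' ω = Function.update ω 0 x' := by
      rw [swapStart, h0, Equiv.swap_apply_left]
    have hrest : ∀ j, j ≠ 0 → Function.update ω 0 x' j = ω j := fun j hj =>
      Function.update_of_ne hj _ _
    simp only [hω', act_asIfStartedAt_update pol x' h0, Function.update_self, h0, if_true,
      one_mul]
    exact ⟨prod_mul_exp_le_of_eq_of_ne_zero hP hδ0 hδ hM γ _ hrest,
      prod_mul_exp_le_of_eq_of_ne_zero hP hδ0 hδ hM γ _ fun j hj => (hrest j hj).symm⟩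
  · have h0' : swapStart x x' ω 0 ≠ x' := by
      rw [swapStart, Function.update_self, Ne, Equiv.swap_apply_eq_iff, Equiv.swap_apply_right]
      exact h0
    simp [h0, h0']

lemma expVal_exp_asIfStartedAt_le (γ : ℝ) (pol : Policy E U) (x x' : E) (n : ℕ) :
    let pol' := asIfStartedAt x pol
    let Z := expVal P pol x n fun ω => exp (γ * rewSum c pol (fun _ => 1) n ω)
    let Z' := expVal P pol' x' n fun ω => exp (γ * rewSum c pol' (fun _ => 1) n ω)
    Z' ≤ (δ⁻¹ * exp (2 * |γ| * M)) * Z ∧ Z ≤ (δ⁻¹ * exp (2 * |γ| * M)) * Z' := by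
  intro pol' Z Z'
  have hsum : Z' = ∑ ω, pathProb P pol' x' n (swapStart x x' ω) *
      exp (γ * rewSum c pol' (fun _ => 1) n (swapStart x x' ω)) :=
    Equiv.sum_comp ((swapStart_involutive x x' n).toPerm _)
      (fun ω => pathProb P pol' x' n ω * exp (γ * rewSum c pol' (fun _ => 1) n ω)) |>.symm
  simp only [Z, hsum, expVal, Finset.mul_sum]
  have hω := pathProb_mul_exp_swapStart_le (n := n) hP hδ0 hδ hM γ pol x x'
  exact ⟨Finset.sum_le_sum fun ω _ => (hω ω).1, Finset.sum_le_sum fun ω _ => (hω ω).2⟩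

lemma abs_JavgSeq_asIfStartedAt_sub_le {γ : ℝ} (hγ : γ ≠ 0) (pol : Policy E U) (x x' : E)
    {n : ℕ} (hn : 0 < n) :
    |JavgSeq P c γ x' (asIfStartedAt x pol) n - JavgSeq P c γ x pol n| ≤
      (log (δ⁻¹ * exp (2 * |γ| * M)) / |γ|) / n := by
  obtain ⟨hle, hge⟩ := expVal_exp_asIfStartedAt_le hP hδ0 hδ hM γ pol x x' n
  have hlog := abs_log_sub_log_le (expVal_exp_pos hP _) (expVal_exp_pos hP _) hle hge
  have hn : (0 : ℝ) < n := Nat.cast_pos.mpr hn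
  simp only [JavgSeq, if_neg hγ, ← mul_sub, abs_mul, one_div, abs_inv, Nat.abs_cast]
  rw [inv_mul_le_iff₀ (mul_pos hn (abs_pos.mpr hγ))]
  calc _ ≤ log (δ⁻¹ * exp (2 * |γ| * M)) := hlog
    _ = _ := by field_simp

lemma Javg_asIfStartedAt {γ : ℝ} (hγ : γ ≠ 0) (pol : Policy E U) (x x' : E) :
    Javg P c γ x' (asIfStartedAt x pol) = Javg P c γ x pol := by
  have hle := isBoundedUnder_le_JavgSeq hP hM γ
  have hge := isBoundedUnder_ge_JavgSeq hP hM γ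
  have hdiff := fun n (hn : 0 < n) =>
    abs_sub_le_iff.mp (abs_JavgSeq_asIfStartedAt_sub_le hP hδ0 hδ hM hγ pol x x' hn)
  rw [Javg_eq_liminf, Javg_eq_liminf]
  exact le_antisymm
    (liminf_le_liminf_of_le_add_div (hge _ _) (hge _ _) (hle _ _) fun n hn =>
      sub_le_iff_le_add'.mp (hdiff n hn).1)
    (liminf_le_liminf_of_le_add_div (hge _ _) (hge _ _) (hle _ _) fun n hn =>
      sub_le_iff_le_add'.mp (hdiff n hn).2)

end StartChange

section Oscillation

variable {E : Type*}

noncomputable def osc (f : E → ℝ) : ℝ := (⨆ z, f z) - ⨅ z, f z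

lemma osc_le [Nonempty E] {f : E → ℝ} {B : ℝ} (h : ∀ z z', f z - f z' ≤ B) :
    osc f ≤ B := by
  rw [osc, sub_le_iff_le_add]
  refine ciSup_le fun z => ?_
  rw [← sub_le_iff_le_add']
  exact le_ciInf fun z' => by linarith [h z z']

lemma osc_iterate_sub_le {T : (E → ℝ) → E → ℝ} {β : ℝ} (hβ : 0 ≤ β)
    (hT : ∀ v w, osc (T v - T w) ≤ β * osc (v - w)) (v : E → ℝ) (N : ℕ) :
    osc (T^[N + 1] v - T^[N] v) ≤ β ^ N * osc (T v - v) := by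
  induction N with
  | zero => simp
  | succ N ih =>
    rw [Function.iterate_succ_apply' T (N + 1), Function.iterate_succ_apply' T N, pow_succ',
      mul_assoc]
    refine (hT _ _).trans (mul_le_mul_of_nonneg_left ?_ hβ)
    rwa [← Function.iterate_succ_apply' T N]

/-- Removing the common minorant `δ` from `μ` and `ν` leaves mass `1 - card E * δ` in each,
and the `δ`-parts cancel in the difference. -/
lemma sum_mul_sub_sum_mul_le_osc [Fintype E] {δ : ℝ} {μ ν : E → ℝ}
    (hμ : ∀ z, δ ≤ μ z) (hν : ∀ z, δ ≤ ν z) (hμ1 : ∑ z, μ z = 1) (hν1 : ∑ z, ν z = 1)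
    (f : E → ℝ) :
    ∑ z, μ z * f z - ∑ z, ν z * f z ≤ (1 - Fintype.card E * δ) * osc f := by
  have hmass : ∀ ρ : E → ℝ, ∑ z, ρ z = 1 →
      ∑ z, (ρ z - δ) = 1 - Fintype.card E * δ := by
    intro ρ hρ
    simp [Finset.sum_sub_distrib, hρ]
  have hsup : ∑ z, (μ z - δ) * f z ≤ (1 - Fintype.card E * δ) * ⨆ z, f z := by
    rw [← hmass μ hμ1, Finset.sum_mul]
    exact Finset.sum_le_sum fun z _ => mul_le_mul_of_nonneg_left
      (le_ciSup (Finite.bddAbove_range f) z) (sub_nonneg.mpr (hμ z))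
  have hinf : (1 - Fintype.card E * δ) * ⨅ z, f z ≤ ∑ z, (ν z - δ) * f z := by
    rw [← hmass ν hν1, Finset.sum_mul]
    exact Finset.sum_le_sum fun z _ => mul_le_mul_of_nonneg_left
      (ciInf_le (Finite.bddBelow_range f) z) (sub_nonneg.mpr (hν z))
  have hsplit : ∑ z, μ z * f z - ∑ z, ν z * f z =
      ∑ z, (μ z - δ) * f z - ∑ z, (ν z - δ) * f z := by
    simp only [sub_mul, Finset.sum_sub_distrib]
    ring
  rw [hsplit, osc, mul_sub]
  exact sub_le_sub hsup hinf

end Oscillation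

section AverageReward

variable {E U : Type*} [Fintype E] [Fintype U]

noncomputable def bellman (P : U → E → E → ℝ) (c : E → U → ℝ) (h : E → ℝ)
    (z : E) : ℝ :=
  ⨆ a, (c z a + ∑ y, P a z y * h y)

noncomputable def greedy [Nonempty U] (P : U → E → E → ℝ) (c : E → U → ℝ)
    (h : E → ℝ) (z : E) : U :=
  (Finite.exists_max fun a => c z a + ∑ y, P a z y * h y).choose

variable {P : U → E → E → ℝ} {c : E → U → ℝ}

lemma le_bellman (h : E → ℝ) (z : E) (a : U) :
    c z a + ∑ y, P a z y * h y ≤ bellman P c h z :=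
  le_ciSup (f := fun a => c z a + ∑ y, P a z y * h y) (Finite.bddAbove_range _) a

variable [Nonempty U]

lemma bellman_eq_greedy (h : E → ℝ) (z : E) :
    bellman P c h z = c z (greedy P c h z) + ∑ y, P (greedy P c h z) z y * h y :=
  le_antisymm (ciSup_le (Finite.exists_max _).choose_spec) (le_bellman h z _)

lemma bellman_sub_bellman_le (v w : E → ℝ) (z : E) :
    bellman P c v z - bellman P c w z ≤ ∑ y, P (greedy P c v z) z y * (v - w) y := by
  have := le_bellman (P := P) (c := c) w z (greedy P c v z)
  simp only [Pi.sub_apply, mul_sub, Finset.sum_sub_distrib]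
  linarith [bellman_eq_greedy (P := P) (c := c) v z]

lemma osc_bellman_sub_bellman_le [Nonempty E] (hP : IsStochastic P) {δ : ℝ}
    (hδ : ∀ a y z, δ ≤ P a y z) (v w : E → ℝ) :
    osc (bellman P c v - bellman P c w) ≤ (1 - Fintype.card E * δ) * osc (v - w) := by
  refine osc_le fun z z' => ?_
  have hz := bellman_sub_bellman_le (P := P) (c := c) v w z
  have hz' := bellman_sub_bellman_le (P := P) (c := c) w v z'
  have hdob := sum_mul_sub_sum_mul_le_osc (hδ (greedy P c v z) z) (hδ (greedy P c w z') z')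
    (hP.2 _ z) (hP.2 _ z') (v - w)
  simp only [Pi.sub_apply, mul_sub, Finset.sum_sub_distrib] at hz hz' hdob ⊢
  linarith

lemma exists_osc_bellman_sub_le [Nonempty E] (hP : IsStochastic P) {δ : ℝ} (hδ0 : 0 < δ)
    (hδ : ∀ a y z, δ ≤ P a y z) {ε : ℝ} (hε : 0 < ε) :
    ∃ h : E → ℝ, osc (bellman P c h - h) ≤ ε := by
  set β : ℝ := 1 - Fintype.card E * δ
  have hβ0 : 0 ≤ β := by
    obtain ⟨a, x⟩ : Nonempty (U × E) := inferInstance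
    have : Fintype.card E * δ ≤ 1 := calc
      Fintype.card E * δ = ∑ _z : E, δ := by simp
      _ ≤ ∑ z, P a x z := Finset.sum_le_sum fun z _ => hδ a x z
      _ = 1 := hP.2 a x
    exact sub_nonneg.mpr this
  have hβ1 : β < 1 := sub_lt_self 1 (mul_pos (Nat.cast_pos.mpr Fintype.card_pos) hδ0)
  have hlim : Tendsto (fun N => β ^ N * osc (bellman P c 0 - 0)) atTop (𝓝 0) := by
    simpa only [zero_mul] using
      (tendsto_pow_atTop_nhds_zero_of_lt_one hβ0 hβ1).mul_const (osc (bellman P c 0 - 0))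
  obtain ⟨N, hN⟩ := (hlim.eventually (eventually_le_nhds hε)).exists
  refine ⟨(bellman P c)^[N] 0, ?_⟩
  rw [← Function.iterate_succ_apply' (bellman P c)]
  exact (osc_iterate_sub_le hβ0 (osc_bellman_sub_bellman_le hP hδ) 0 N).trans hN

end AverageReward

section AverageRewardVerification

variable {E U : Type*} [Fintype E] [DecidableEq E] {P : U → E → E → ℝ} {c : E → U → ℝ}
  (hP : IsStochastic P) {h : E → ℝ} {g : ℝ}
include hP

lemma expVal_rewSum_add_succ (pol : Policy E U) (x : E) (n : ℕ) :
    expVal P pol x (n + 1) (fun ω => rewSum c pol (fun _ => 1) (n + 1) ω + h (ω (Fin.last _))) =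
      expVal P pol x n fun ω => rewSum c pol (fun _ => 1) n ω +
        (c (ω (Fin.last n)) (pol n ω) + ∑ y, P (pol n ω) (ω (Fin.last n)) y * h y) := by
  rw [expVal_succ]
  congr 1
  funext ω
  simp only [rewSum_snoc, Fin.snoc_last, one_mul, mul_add, Finset.sum_add_distrib,
    ← Finset.sum_mul, hP.2]
  ring

lemma expVal_rewSum_add_le (hB : ∀ z a, c z a + ∑ y, P a z y * h y ≤ h z + g)
    (pol : Policy E U) (x : E) (n : ℕ) :
    expVal P pol x n (fun ω => rewSum c pol (fun _ => 1) n ω + h (ω (Fin.last n))) ≤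
      n * g + h x := by
  induction n with
  | zero => simp [expVal_zero, rewSum]
  | succ n ih =>
    rw [expVal_rewSum_add_succ hP]
    calc _ ≤ expVal P pol x n
          (fun ω => rewSum c pol (fun _ => 1) n ω + h (ω (Fin.last n)) + g) :=
          expVal_mono hP fun ω => by linarith [hB (ω (Fin.last n)) (pol n ω)]
      _ ≤ (n + 1 : ℕ) * g + h x := by
          rw [expVal_add_const hP]
          push_cast
          linarith

lemma le_expVal_rewSum_add {u : E → U}
    (hB : ∀ z, h z + g ≤ c z (u z) + ∑ y, P (u z) z y * h y) (x : E) (n : ℕ) :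
    n * g + h x ≤ expVal P (stationaryPolicy u) x n
      (fun ω => rewSum c (stationaryPolicy u) (fun _ => 1) n ω + h (ω (Fin.last n))) := by
  induction n with
  | zero => simp [expVal_zero, rewSum]
  | succ n ih =>
    rw [expVal_rewSum_add_succ hP]
    calc ((n + 1 : ℕ) : ℝ) * g + h x ≤ expVal P (stationaryPolicy u) x n (fun ω =>
          rewSum c (stationaryPolicy u) (fun _ => 1) n ω + h (ω (Fin.last n)) + g) := by
          rw [expVal_add_const hP]
          push_cast
          linarith
      _ ≤ _ := expVal_mono hP fun ω => by
          simp only [stationaryPolicy]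
          linarith [hB (ω (Fin.last n))]

lemma expVal_rewSum_le (hB : ∀ z a, c z a + ∑ y, P a z y * h y ≤ h z + g)
    (pol : Policy E U) (x : E) (n : ℕ) :
    expVal P pol x n (rewSum c pol (fun _ => 1) n) ≤ n * g + osc h := by
  have hsum := expVal_rewSum_add_le hP hB pol x n
  rw [expVal_add] at hsum
  have hinf : (⨅ z, h z) ≤ expVal P pol x n fun ω => h (ω (Fin.last n)) :=
    le_expVal_of_forall_le hP fun ω => ciInf_le (Finite.bddBelow_range h) _
  have hsup : h x ≤ ⨆ z, h z := le_ciSup (Finite.bddAbove_range h) x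
  rw [osc]
  linarith

lemma le_expVal_rewSum {u : E → U}
    (hB : ∀ z, h z + g ≤ c z (u z) + ∑ y, P (u z) z y * h y) (x : E) (n : ℕ) :
    n * g - osc h ≤
      expVal P (stationaryPolicy u) x n (rewSum c (stationaryPolicy u) (fun _ => 1) n) := by
  have hsum := le_expVal_rewSum_add hP hB x n
  rw [expVal_add] at hsum
  have hsup : (expVal P (stationaryPolicy u) x n fun ω => h (ω (Fin.last n))) ≤ ⨆ z, h z :=
    expVal_le_of_forall_le hP fun ω => le_ciSup (Finite.bddAbove_range h) _
  have hinf : (⨅ z, h z) ≤ h x := ciInf_le (Finite.bddBelow_range h) x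
  rw [osc]
  linarith

end AverageRewardVerification

section AverageRewardGain

variable {E U : Type*} [Fintype E] [DecidableEq E] [Nonempty E] [Nonempty U]
  {P : U → E → E → ℝ} {c : E → U → ℝ} (hP : IsStochastic P) {M : ℝ}
  (hM : ∀ x a, |c x a| ≤ M) {h : E → ℝ} {g : ℝ}
include hP hM

lemma Javg_zero_le (hB : ∀ z a, c z a + ∑ y, P a z y * h y ≤ h z + g) (pol : Policy E U)
    (x : E) : Javg P c 0 x pol ≤ g := by
  rw [Javg_eq_liminf, ← liminf_const (f := (atTop : Filter ℕ)) g]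
  refine liminf_le_liminf_of_le_add_div (C := osc h) (isBoundedUnder_ge_JavgSeq hP hM 0 x pol)
    isBoundedUnder_const isBoundedUnder_const fun n hn => ?_
  have hn : (0 : ℝ) < n := Nat.cast_pos.mpr hn
  rw [JavgSeq, if_pos rfl, one_div_mul_eq_div, div_le_iff₀ hn, add_mul,
    div_mul_cancel₀ _ hn.ne']
  linarith [expVal_rewSum_le hP hB pol x n]

lemma le_Javg_zero_stationaryPolicy {u : E → U}
    (hB : ∀ z, h z + g ≤ c z (u z) + ∑ y, P (u z) z y * h y) (x : E) :
    g ≤ Javg P c 0 x (stationaryPolicy u) := by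
  rw [Javg_eq_liminf, ← liminf_const (f := (atTop : Filter ℕ)) g]
  refine liminf_le_liminf_of_le_add_div (C := osc h) isBoundedUnder_const
    (isBoundedUnder_ge_JavgSeq hP hM 0 x _) (isBoundedUnder_le_JavgSeq hP hM 0 x _)
    fun n hn => ?_
  have hn : (0 : ℝ) < n := Nat.cast_pos.mpr hn
  rw [JavgSeq, if_pos rfl, one_div_mul_eq_div, ← sub_le_iff_le_add, le_div_iff₀ hn, sub_mul,
    div_mul_cancel₀ _ hn.ne']
  linarith [le_expVal_rewSum hP hB x n]

lemma exists_stationaryPolicy_Javg_zero_ge [Fintype U] {δ : ℝ} (hδ0 : 0 < δ)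
    (hδ : ∀ a y z, δ ≤ P a y z) {ε : ℝ} (hε : 0 < ε) :
    ∃ u : E → U, ∀ x x' (pol : Policy E U),
      Javg P c 0 x pol ≤ Javg P c 0 x' (stationaryPolicy u) + ε := by
  obtain ⟨h, hosc⟩ := exists_osc_bellman_sub_le (c := c) hP hδ0 hδ hε
  have hsup : ∀ z, bellman P c h z - h z ≤ ⨆ z, (bellman P c h - h) z := fun z =>
    le_ciSup (f := bellman P c h - h) (Finite.bddAbove_range _) z
  have hinf : ∀ z, (⨅ z, (bellman P c h - h) z) ≤ bellman P c h z - h z := fun z =>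
    ciInf_le (f := bellman P c h - h) (Finite.bddBelow_range _) z
  refine ⟨greedy P c h, fun x x' pol => ?_⟩
  have hup := Javg_zero_le hP hM (h := h) (g := ⨆ z, (bellman P c h - h) z)
    (fun z a => by linarith [le_bellman (P := P) (c := c) h z a, hsup z]) pol x
  have hlo := le_Javg_zero_stationaryPolicy hP hM (h := h) (g := ⨅ z, (bellman P c h - h) z)
    (u := greedy P c h) (fun z => by linarith [bellman_eq_greedy (P := P) (c := c) h z, hinf z]) x'
  rw [osc] at hosc
  linarith

end AverageRewardGain

lemma CondC.exists_pos_le {E U : Type*} [Finite E] [Finite U] [Nonempty E] [Nonempty U]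
    {P : U → E → E → ℝ} (hC : CondC P) : ∃ δ > 0, ∀ a x y, δ ≤ P a x y := by
  obtain ⟨t, ht⟩ := Finite.exists_min fun t : U × E × E => P t.1 t.2.1 t.2.2
  exact ⟨_, hC _ _ _, fun a x y => ht (a, x, y)⟩

lemma ciSup_le_ciSup_of_forall_exists_le_add {ι ι' : Type*} [Nonempty ι] {f : ι → ℝ}
    {g : ι' → ℝ} (hg : BddAbove (Set.range g))
    (h : ∀ ε > 0, ∀ i, ∃ j, f i ≤ g j + ε) :
    ⨆ i, f i ≤ ⨆ j, g j :=
  le_of_forall_pos_le_add fun ε hε => ciSup_le fun i =>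
    let ⟨j, hj⟩ := h ε hε i
    hj.trans (add_le_add_left (le_ciSup hg j) ε)

/-- under condition (C), the optimal value of the long-run risk-sensitive
averaged criterion does not depend on the starting point. -/
theorem optimal_value_independent_of_start
    {E U : Type*} [Fintype E] [DecidableEq E] [Fintype U] [Nonempty E] [Nonempty U]
    (P : U → E → E → ℝ) (c : E → U → ℝ)
    (hP : IsStochastic P) (hC : CondC P) :
    ∀ (γ : ℝ) (x x' : E),
      (⨆ pol : Policy E U, Javg P c γ x pol) = ⨆ pol : Policy E U, Javg P c γ x' pol := by
  intro γ x x'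
  obtain ⟨δ, hδ0, hδ⟩ := hC.exists_pos_le
  obtain ⟨M, hM⟩ := Finite.exists_le fun p : E × U => |c p.1 p.2|
  have hM : ∀ y a, |c y a| ≤ M := fun y a => hM (y, a)
  have key : ∀ y y' : E, ∀ ε > 0, ∀ pol : Policy E U,
      ∃ pol', Javg P c γ y pol ≤ Javg P c γ y' pol' + ε := by
    intro y y' ε hε pol
    rcases eq_or_ne γ 0 with rfl | hγ
    · obtain ⟨u, hu⟩ := exists_stationaryPolicy_Javg_zero_ge hP hM hδ0 hδ hε
      exact ⟨stationaryPolicy u, hu y y' pol⟩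
    · exact ⟨asIfStartedAt y pol, (Javg_asIfStartedAt hP hδ0 hδ hM hγ pol y y').ge.trans
        (le_add_of_nonneg_right hε.le)⟩
  exact le_antisymm
    (ciSup_le_ciSup_of_forall_exists_le_add (bddAbove_range_Javg hP hM γ x') (key x x'))
    (ciSup_le_ciSup_of_forall_exists_le_add (bddAbove_range_Javg hP hM γ x) (key x' x))
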